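/- arXiv:1007.2311 — 6 statements merged into one kernel-verified Lean document; each statement's English description precedes it below -/
import Mathlib

section
/- Let n be a positive integer and let a, b be integers with 0 ≤ a ≤ n and 0 ≤ b ≤ n. There exists an orientation of the n-cube in which every vertex has in-degree equal to a or equal to b if and only if there exist non-negative integers s and t such that s + t = 2^n and a·s + b·t = n·2^(n-1). -/
/-- Flip coordinate `i` of a binary `n`-tuple. -/
def flipBit {n : ℕ} (v : Fin n → ZMod 2) (i : Fin n) : Fin n → ZMod 2 :=
  Function.update v i (v i + 1)

/-- An orientation of the `n`-cube: to each edge (a pair of vertices differing in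
exactly one coordinate) we assign a head, one of its two endpoints.  The edge at
vertex `v` in direction `i` joins `v` and `flipBit v i`; `head v i` is the
assigned head of that edge, which must be one of the endpoints and must not
depend on from which endpoint the edge is viewed. -/
structure CubeOrientation (n : ℕ) where
  head : (Fin n → ZMod 2) → Fin n → (Fin n → ZMod 2)
  head_mem : ∀ v i, head v i = v ∨ head v i = flipBit v i
  compatible : ∀ v i, head (flipBit v i) i = head v i

/-- The in-degree of a vertex `v`: the number of edges incident to `v`
whose head is `v`. -/
def CubeOrientation.inDeg {n : ℕ} (o : CubeOrientation n) (v : Fin n → ZMod 2) : ℕ :=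
  (Finset.univ.filter fun i : Fin n => o.head v i = v).card

/-!
Every edge is counted once, at its head, so the in-degrees of an orientation of the `n`-cube sum
to `n * 2 ^ (n - 1)`; counting the vertices of in-degree `a` and `b` gives `s` and `t`.

Conversely let `a ≤ b`. Reversing all edges turns `(a, b)` into `(n - b, n - a)`, so we may
assume `n ≤ a + b`. The counting condition reads `(b - a) * 2t = 2 ^ n * (n - 2a)`, hence the odd
part `m` of `b - a = 2 ^ e * m` divides `n - 2a` and `a + b - n = m * k` with `k ≤ 2 ^ e`; with
`q = n - b` this gives `n = m (2 ^ e + k) + 2q`, `a = m k + q`, `b = m (2 ^ e + k) + q`. The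
`n`-cube is the product of a `2q`-cube, oriented so that every in-degree is `q`, and an
`m (2 ^ e + k)`-cube, oriented by blowing up each direction of a `(2 ^ e + k)`-cube `m`-fold. That
smaller cube is oriented with in-degrees `k` and `2 ^ e + k` by means of the Hamming syndrome of its
first `2 ^ e` coordinates and a set of `k` syndromes.
-/

open Finset Function

lemma ZMod.two_add_one_eq_iff (a c : ZMod 2) : a + 1 = c ↔ ¬ a = c := by
  revert a c; decide

lemma ZMod.two_eq_zero_or_one (a : ZMod 2) : a = 0 ∨ a = 1 := by
  revert a; decide

open scoped Classical

lemma Finset.card_filter_sum {α β : Type*} [Fintype α] [Fintype β] (p : α ⊕ β → Prop) :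
    #{x | p x} = #{a | p (Sum.inl a)} + #{b | p (Sum.inr b)} := by
  simp only [card_filter, Fintype.sum_sum_type]

lemma Finset.card_filter_add_left_mem {G : Type*} [AddGroup G] [Fintype G] (S : Finset G)
    (c : G) : #{g | c + g ∈ S} = #S := by
  rw [card_filter, ← Equiv.sum_comp (Equiv.addLeft (-c))]
  simp

lemma Finset.card_filter_fst {α β : Type*} [Fintype α] [Fintype β] (p : α → Prop) :
    #{x : α × β | p x.1} = #{a | p a} * Fintype.card β := by
  rw [card_filter, card_filter, Fintype.sum_prod_type, sum_mul]
  refine sum_congr rfl fun a _ => ?_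
  split_ifs <;> simp

lemma Fintype.exists_sum_eq_of_forall_eq_or_eq {α R : Type*} [Fintype α] [NonAssocSemiring R]
    {f : α → R} {a b : R} (h : ∀ x, f x = a ∨ f x = b) :
    ∃ s t : ℕ, s + t = Fintype.card α ∧ ∑ x, f x = a * s + b * t := by
  refine ⟨#{x | f x = a}, #{x | ¬ f x = a}, card_filter_add_card_filter_not _, ?_⟩
  calc ∑ x, f x = ∑ x, if f x = a then a else b :=
        sum_congr _ _ fun x => by split_ifs with hx; exacts [hx, (h x).resolve_left hx]
    _ = _ := by rw [sum_ite, sum_const, sum_const, nsmul_eq_mul', nsmul_eq_mul']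

lemma two_mul_mul_two_pow_sub_one (n : ℕ) : 2 * (n * 2 ^ (n - 1)) = n * 2 ^ n := by
  cases n <;> simp [pow_succ]; ring

lemma Pi.single_one_comp_equiv_symm {ι κ : Type*} [DecidableEq ι] [DecidableEq κ] (e : κ ≃ ι)
    (j : κ) : (Pi.single j 1 : κ → ZMod 2) ∘ e.symm = Pi.single (e j) 1 := by
  ext i
  simp [Pi.single_apply, Equiv.symm_apply_eq]

lemma add_single_add_single {ι : Type*} [DecidableEq ι] (v : ι → ZMod 2) (i : ι) :
    v + Pi.single i 1 + Pi.single i 1 = v := by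
  rw [add_assoc, ZModModule.add_self, add_zero]

/-- Here `B - A = 2 ^ e * m` with `m` odd, `m * k = A + B - n` and `q = n - B`. -/
lemma Nat.exists_two_pow_add_decomposition {n A B N : ℕ} (hAB : A ≤ B) (hBn : B ≤ n)
    (h2A : 2 * A ≤ n) (hn : n ≤ A + B) (hdvd : B - A ∣ 2 ^ N * (n - 2 * A)) :
    ∃ e m k q, k ≤ 2 ^ e ∧ n = m * (2 ^ e + k) + 2 * q ∧ A = m * k + q ∧
      B = m * (2 ^ e + k) + q := by
  rcases hAB.eq_or_lt with rfl | hlt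
  · have : n - 2 * A = 0 := by simpa using hdvd
    exact ⟨0, 0, 0, A, by simp, by omega, by simp, by simp⟩
  obtain ⟨e, m, hm, hd⟩ := Nat.exists_eq_two_pow_mul_odd (n := B - A) (by omega)
  rw [mul_comm] at hd
  have hmBA : m ∣ B - A := Dvd.intro _ hd.symm
  have hmn : m ∣ n - 2 * A :=
    (Nat.Coprime.pow_right N (Nat.coprime_two_right.mpr hm)).dvd_of_dvd_mul_left
      (hmBA.trans hdvd)
  obtain ⟨k, hk⟩ : m ∣ A + B - n := by
    rw [show A + B - n = (B - A) - (n - 2 * A) by omega]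
    exact Nat.dvd_sub hmBA hmn
  have hk2 : k ≤ 2 ^ e := by
    refine Nat.le_of_mul_le_mul_left ?_ hm.pos
    omega
  exact ⟨e, m, k, n - B, hk2, by rw [mul_add]; omega, by omega, by rw [mul_add]; omega⟩

section Parity

variable {ι : Type*} [Fintype ι] [DecidableEq ι]

def parity (v : ι → ZMod 2) : ZMod 2 := ∑ i, v i

lemma parity_add_single (v : ι → ZMod 2) (i : ι) :
    parity (v + Pi.single i 1) = parity v + 1 := by
  simp [parity, sum_add_distrib]

end Parity

/-- `IsHead v i` says that `v` is the head of the edge joining `v` and `v + Pi.single i 1`. -/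
structure EdgeOrientation (ι : Type*) [DecidableEq ι] where
  IsHead : (ι → ZMod 2) → ι → Prop
  isHead_add_single : ∀ v i, IsHead (v + Pi.single i 1) i ↔ ¬ IsHead v i

namespace EdgeOrientation

variable {ι κ : Type*} [DecidableEq ι] [DecidableEq κ]

noncomputable def inDeg [Fintype ι] (O : EdgeOrientation ι) (v : ι → ZMod 2) : ℕ :=
  #{i | O.IsHead v i}

section Counting

variable [Fintype ι]

lemma two_mul_card_filter_isHead (O : EdgeOrientation ι) (i : ι) :
    2 * #{v | O.IsHead v i} = 2 ^ Fintype.card ι := by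
  have hflip : #{v | ¬ O.IsHead v i} = #{v | O.IsHead v i} := by
    simp only [card_filter, ← O.isHead_add_single _ i]
    exact Equiv.sum_comp (Equiv.addRight _) (fun v => if O.IsHead v i then 1 else 0)
  rw [two_mul]
  nth_rewrite 2 [← hflip]
  rw [card_filter_add_card_filter_not, card_univ, Fintype.card_fun, ZMod.card]

theorem two_mul_sum_inDeg (O : EdgeOrientation ι) :
    2 * ∑ v, O.inDeg v = Fintype.card ι * 2 ^ Fintype.card ι := by
  simp only [inDeg, card_filter]
  rw [sum_comm, mul_sum]
  simp only [← card_filter, two_mul_card_filter_isHead, sum_const, card_univ, smul_eq_mul]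

end Counting

def reverse (O : EdgeOrientation ι) : EdgeOrientation ι where
  IsHead v i := ¬ O.IsHead v i
  isHead_add_single v i := by rw [O.isHead_add_single]

lemma inDeg_reverse_add_inDeg [Fintype ι] (O : EdgeOrientation ι) (v : ι → ZMod 2) :
    O.reverse.inDeg v + O.inDeg v = Fintype.card ι := by
  rw [add_comm, inDeg, inDeg, ← card_univ]
  convert card_filter_add_card_filter_not (s := univ) (O.IsHead v)

def congr (O : EdgeOrientation ι) (e : κ ≃ ι) : EdgeOrientation κ where
  IsHead v j := O.IsHead (v ∘ e.symm) (e j)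
  isHead_add_single v j := by
    rw [Pi.add_comp, Pi.single_one_comp_equiv_symm, O.isHead_add_single]

lemma inDeg_congr [Fintype ι] [Fintype κ] (O : EdgeOrientation ι) (e : κ ≃ ι)
    (v : κ → ZMod 2) : (O.congr e).inDeg v = O.inDeg (v ∘ e.symm) := by
  simp only [inDeg, card_filter]
  exact Equiv.sum_comp e (fun i => if O.IsHead (v ∘ e.symm) i then 1 else 0)

def sum (O : EdgeOrientation ι) (P : EdgeOrientation κ) : EdgeOrientation (ι ⊕ κ) where
  IsHead v := Sum.elim (O.IsHead (v ∘ Sum.inl)) (P.IsHead (v ∘ Sum.inr))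
  isHead_add_single v x := by
    cases x with
    | inl i =>
      have : (v + Pi.single (Sum.inl i) 1) ∘ Sum.inl = v ∘ Sum.inl + Pi.single i 1 := by
        ext j; simp [Pi.single_apply]
      simp only [Sum.elim_inl, this, O.isHead_add_single]
    | inr j =>
      have : (v + Pi.single (Sum.inr j) 1) ∘ Sum.inr = v ∘ Sum.inr + Pi.single j 1 := by
        ext j; simp [Pi.single_apply]
      simp only [Sum.elim_inr, this, P.isHead_add_single]

lemma inDeg_sum [Fintype ι] [Fintype κ] (O : EdgeOrientation ι) (P : EdgeOrientation κ)
    (v : ι ⊕ κ → ZMod 2) :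
    (O.sum P).inDeg v = O.inDeg (v ∘ Sum.inl) + P.inDeg (v ∘ Sum.inr) :=
  card_filter_sum _

section BlowUp

variable {ρ : Type*} [Fintype ρ] [DecidableEq ρ]

def blockSum (w : ι × ρ → ZMod 2) : ι → ZMod 2 := fun i => ∑ r, w (i, r)

lemma blockSum_add_single (w : ι × ρ → ZMod 2) (x : ι × ρ) :
    blockSum (w + Pi.single x 1) = blockSum w + Pi.single x.1 1 := by
  ext i
  by_cases h : i = x.1 <;> simp [blockSum, sum_add_distrib, Pi.single_apply, Prod.ext_iff, h]

variable (ρ) in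
def blowUp (O : EdgeOrientation ι) : EdgeOrientation (ι × ρ) where
  IsHead w x := O.IsHead (blockSum w) x.1
  isHead_add_single w x := by rw [blockSum_add_single, O.isHead_add_single]

lemma inDeg_blowUp [Fintype ι] (O : EdgeOrientation ι) (w : ι × ρ → ZMod 2) :
    (O.blowUp ρ).inDeg w = O.inDeg (blockSum w) * Fintype.card ρ :=
  card_filter_fst _

end BlowUp

variable (ι) [Fintype ι] in
def regular : EdgeOrientation (ι ⊕ ι) where
  IsHead v x := parity v = Sum.elim (fun _ => 0) (fun _ => 1) x
  isHead_add_single v x := by rw [parity_add_single, ZMod.two_add_one_eq_iff]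

lemma inDeg_regular [Fintype ι] (v : ι ⊕ ι → ZMod 2) :
    (regular ι).inDeg v = Fintype.card ι := by
  rw [inDeg, card_filter_sum]
  rcases ZMod.two_eq_zero_or_one (parity v) with h | h <;> simp [regular, h]

section Syndrome

variable {G : Type*} [AddCommGroup G] [Module (ZMod 2) G] [Fintype G] [DecidableEq G]
  (S : Finset G)

def syndrome (v : G ⊕ S → ZMod 2) : G := ∑ g, v (Sum.inl g) • g

lemma syndrome_add_single_inl (v : G ⊕ S → ZMod 2) (g : G) :
    syndrome S (v + Pi.single (Sum.inl g) 1) = syndrome S v + g := by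
  simp [syndrome, add_smul, sum_add_distrib, Pi.single_apply]

/-- Every edge joins an even and an odd vertex, and the even one is its head unless its syndrome
lies in `S` and the edge runs in a `G`-direction. An odd vertex `v` thus receives exactly the
edges in the directions `s - syndrome S v` for `s ∈ S`. -/
def syndromeOrientation : EdgeOrientation (G ⊕ S) where
  IsHead v := Sum.elim
    (fun g => if parity v = 0 then syndrome S v ∉ S else syndrome S v + g ∈ S)
    (fun _ => parity v = 0)
  isHead_add_single v x := by
    have hpar := ZMod.two_add_one_eq_iff (parity v) 0
    cases x with
    | inl g =>
      by_cases h : parity v = 0 <;>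
        simp [parity_add_single, syndrome_add_single_inl, hpar, h, add_assoc,
          ZModModule.add_self]
    | inr s => simp [parity_add_single, hpar]

lemma inDeg_syndromeOrientation (v : G ⊕ S → ZMod 2) :
    (syndromeOrientation S).inDeg v = #S ∨
      (syndromeOrientation S).inDeg v = Fintype.card G + #S := by
  rw [inDeg, card_filter_sum]
  by_cases h : parity v = 0
  · by_cases hS : syndrome S v ∈ S <;> simp [syndromeOrientation, h, hS]
  · left
    simp only [syndromeOrientation, Sum.elim_inl, Sum.elim_inr, h, if_false, filter_false,
      card_empty, add_zero]
    convert card_filter_add_left_mem S (syndrome S v)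

end Syndrome

theorem exists_inDeg_eq_or_eq_of_le_two_pow (e m k q : ℕ) (hk : k ≤ 2 ^ e) :
    ∃ O : EdgeOrientation (Fin (m * (2 ^ e + k) + 2 * q)),
      ∀ v, O.inDeg v = m * k + q ∨ O.inDeg v = m * (2 ^ e + k) + q := by
  obtain ⟨S, -, hS⟩ := exists_subset_card_eq (s := (univ : Finset (Fin e → ZMod 2)))
    (by simpa using hk)
  let P := ((syndromeOrientation S).blowUp (Fin m)).sum (regular (Fin q))
  have hcard : Fintype.card (Fin (m * (2 ^ e + k) + 2 * q)) =
      Fintype.card ((((Fin e → ZMod 2) ⊕ S) × Fin m) ⊕ (Fin q ⊕ Fin q)) := by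
    simp [hS]; ring
  let φ := Fintype.equivOfCardEq hcard
  refine ⟨P.congr φ, fun v => ?_⟩
  rw [inDeg_congr, inDeg_sum, inDeg_blowUp, inDeg_regular, Fintype.card_fin, Fintype.card_fin]
  rcases inDeg_syndromeOrientation S (blockSum ((v ∘ φ.symm) ∘ Sum.inl)) with h | h
  · left; rw [h, hS]; ring
  · right; rw [h, hS, Fintype.card_fun, ZMod.card, Fintype.card_fin]; ring

theorem exists_inDeg_eq_or_eq_of_dvd {n A B N : ℕ} (hAB : A ≤ B) (hBn : B ≤ n)
    (h2A : 2 * A ≤ n) (hn : n ≤ A + B) (hdvd : B - A ∣ 2 ^ N * (n - 2 * A)) :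
    ∃ O : EdgeOrientation (Fin n), ∀ v, O.inDeg v = A ∨ O.inDeg v = B := by
  obtain ⟨e, m, k, q, hk, rfl, rfl, rfl⟩ := Nat.exists_two_pow_add_decomposition hAB hBn h2A hn hdvd
  exact exists_inDeg_eq_or_eq_of_le_two_pow e m k q hk

theorem exists_inDeg_eq_or_eq {n A B s t : ℕ} (hAn : A ≤ n) (hBn : B ≤ n)
    (hst : s + t = 2 ^ n) (hsum : A * s + B * t = n * 2 ^ (n - 1)) :
    ∃ O : EdgeOrientation (Fin n), ∀ v, O.inDeg v = A ∨ O.inDeg v = B := by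
  wlog hAB : A ≤ B generalizing A B s t
  · obtain ⟨O, hO⟩ := this hBn hAn (t.add_comm s ▸ hst) (by rw [add_comm, hsum]) (by omega)
    exact ⟨O, fun v => (hO v).symm⟩
  replace hsum : 2 * (A * s + B * t) = n * 2 ^ n := by
    rw [hsum, two_mul_mul_two_pow_sub_one]
  have h2A : 2 * A ≤ n := by
    refine Nat.le_of_mul_le_mul_right ?_ (Nat.two_pow_pos n)
    rw [← hsum, ← hst]
    nlinarith
  have hnB : n ≤ 2 * B := by
    refine Nat.le_of_mul_le_mul_right ?_ (Nat.two_pow_pos n)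
    rw [← hsum, ← hst]
    nlinarith
  have hdvdA : B - A ∣ 2 ^ n * (n - 2 * A) := ⟨2 * t, by
    zify [hAB, h2A] at hst hsum ⊢; linear_combination 2 * A * hst - hsum⟩
  have hdvdB : B - A ∣ 2 ^ n * (2 * B - n) := ⟨2 * s, by
    zify [hAB, hnB] at hst hsum ⊢; linear_combination hsum - 2 * B * hst⟩
  by_cases hn : n ≤ A + B
  · exact exists_inDeg_eq_or_eq_of_dvd hAB hBn h2A hn hdvdA
  obtain ⟨O, hO⟩ := exists_inDeg_eq_or_eq_of_dvd (n := n) (A := n - B) (B := n - A)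
    (by omega) (by omega) (by omega) (by omega)
    (by rwa [show n - A - (n - B) = B - A by omega, show n - 2 * (n - B) = 2 * B - n by omega])
  refine ⟨O.reverse, fun v => ?_⟩
  have := O.inDeg_reverse_add_inDeg v
  rw [Fintype.card_fin] at this
  rcases hO v with h | h <;> omega

end EdgeOrientation

lemma flipBit_eq_add_single {n : ℕ} (v : Fin n → ZMod 2) (i : Fin n) :
    flipBit v i = v + Pi.single i 1 := by
  ext j
  by_cases h : j = i <;> simp [flipBit, h]

namespace CubeOrientation

variable {n : ℕ}

def toEdgeOrientation (o : CubeOrientation n) : EdgeOrientation (Fin n) where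
  IsHead v i := o.head v i = v
  isHead_add_single v i := by
    rw [← flipBit_eq_add_single, o.compatible]
    rcases o.head_mem v i with h | h <;> simp [h, flipBit_eq_add_single]

lemma inDeg_toEdgeOrientation (o : CubeOrientation n) (v : Fin n → ZMod 2) :
    o.toEdgeOrientation.inDeg v = o.inDeg v := by
  rw [EdgeOrientation.inDeg, inDeg]
  convert rfl
  exact Iff.rfl

theorem sum_inDeg (o : CubeOrientation n) : ∑ v, o.inDeg v = n * 2 ^ (n - 1) := by
  have := o.toEdgeOrientation.two_mul_sum_inDeg
  simp only [inDeg_toEdgeOrientation, Fintype.card_fin] at this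
  rw [← two_mul_mul_two_pow_sub_one] at this
  omega

end CubeOrientation

namespace EdgeOrientation

variable {n : ℕ}

noncomputable def toCubeOrientation (O : EdgeOrientation (Fin n)) : CubeOrientation n where
  head v i := if O.IsHead v i then v else flipBit v i
  head_mem v i := by split_ifs <;> simp
  compatible v i := by
    by_cases h : O.IsHead v i <;>
      simp [h, flipBit_eq_add_single, O.isHead_add_single, add_single_add_single]

lemma inDeg_toCubeOrientation (O : EdgeOrientation (Fin n)) (v : Fin n → ZMod 2) :
    O.toCubeOrientation.inDeg v = O.inDeg v := by
  rw [CubeOrientation.inDeg, inDeg]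
  congr 1
  ext i
  by_cases h : O.IsHead v i <;> simp [toCubeOrientation, h, flipBit_eq_add_single]

end EdgeOrientation

theorem hypercube_two_indegrees_iff_general (n : ℕ) (a b : ℤ)
    (ha0 : 0 ≤ a) (han : a ≤ n) (hb0 : 0 ≤ b) (hbn : b ≤ n) :
    (∃ o : CubeOrientation n, ∀ v, (o.inDeg v : ℤ) = a ∨ (o.inDeg v : ℤ) = b) ↔
      (∃ s t : ℕ, s + t = 2 ^ n ∧ a * s + b * t = n * 2 ^ (n - 1)) := by
  constructor
  · rintro ⟨o, ho⟩
    obtain ⟨s, t, hst, hsum⟩ := Fintype.exists_sum_eq_of_forall_eq_or_eq ho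
    refine ⟨s, t, by simpa using hst, ?_⟩
    rw [← hsum]
    exact_mod_cast o.sum_inDeg
  · rintro ⟨s, t, hst, hsum⟩
    lift a to ℕ using ha0
    lift b to ℕ using hb0
    obtain ⟨O, hO⟩ := EdgeOrientation.exists_inDeg_eq_or_eq (by exact_mod_cast han)
      (by exact_mod_cast hbn) hst (by exact_mod_cast hsum)
    refine ⟨O.toCubeOrientation, fun v => ?_⟩
    simp only [EdgeOrientation.inDeg_toCubeOrientation, Nat.cast_inj]
    exact hO v

theorem hypercube_two_indegrees_iff (n : ℕ) (hn : 0 < n) (a b : ℤ)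
    (ha0 : 0 ≤ a) (han : a ≤ n) (hb0 : 0 ≤ b) (hbn : b ≤ n) :
    (∃ o : CubeOrientation n, ∀ v, (o.inDeg v : ℤ) = a ∨ (o.inDeg v : ℤ) = b) ↔
      (∃ s t : ℕ, s + t = 2 ^ n ∧ a * s + b * t = n * 2 ^ (n - 1)) :=
  hypercube_two_indegrees_iff_general n a b ha0 han hb0 hbn
end

section
/- Let n be a positive integer and let a, b be integers with 0 ≤ a ≤ n and 0 ≤ b ≤ n. If there exists an orientation of the n-cube in which every vertex has in-degree a or b, then there exists an orientation of the (n+2)-cube in which every vertex has in-degree a+1 or b+1. -/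
/-!
The `(n + 2)`-cube is the product of the `n`-cube and the square, and orientations of two cubes
combine into an orientation of their product in which in-degrees add. Orienting the square as a
directed 4-cycle gives every vertex in-degree `1`, so the product with the given orientation of
the `n`-cube raises every in-degree by exactly one.
-/

section FlipBit

variable {n k : ℕ}

lemma flipBit_ne (v : Fin n → ZMod 2) (i : Fin n) : flipBit v i ≠ v := fun h => by
  simpa [flipBit] using congrFun h i

@[simp]
lemma flipBit_flipBit (v : Fin n → ZMod 2) (i : Fin n) : flipBit (flipBit v i) i = v := by
  have two : (2 : ZMod 2) = 0 := rfl
  simp [flipBit, add_assoc, one_add_one_eq_two, two]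

lemma flipBit_comp_of_injective {f : Fin k → Fin n} (hf : f.Injective)
    (v : Fin n → ZMod 2) (i : Fin k) : flipBit v (f i) ∘ f = flipBit (v ∘ f) i :=
  Function.update_comp_eq_of_injective v hf i _

lemma flipBit_comp_of_notMem_range {f : Fin k → Fin n} {i : Fin n} (hi : i ∉ Set.range f)
    (v : Fin n → ZMod 2) : flipBit v i ∘ f = v ∘ f :=
  Function.update_comp_eq_of_notMem_range v _ hi

end FlipBit

lemma Fin.castAdd_ne_natAdd {n m : ℕ} (i : Fin n) (j : Fin m) : Fin.castAdd m i ≠ Fin.natAdd n j :=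
  Fin.ne_of_lt (by simp only [Fin.lt_def, Fin.val_castAdd, Fin.val_natAdd]; omega)

namespace CubeOrientation

variable {n m : ℕ}

def headDirs (o : CubeOrientation n) (v : Fin n → ZMod 2) : Finset (Fin n) :=
  Finset.univ.filter fun i => o.head v i = v

lemma inDeg_eq_card_headDirs (o : CubeOrientation n) (v : Fin n → ZMod 2) :
    o.inDeg v = (o.headDirs v).card := rfl

lemma mem_headDirs_flipBit (o : CubeOrientation n) (v : Fin n → ZMod 2) (i : Fin n) :
    i ∈ o.headDirs (flipBit v i) ↔ i ∉ o.headDirs v := by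
  simp only [headDirs, Finset.mem_filter, Finset.mem_univ, true_and, o.compatible]
  rcases o.head_mem v i with h | h <;> simp [h, flipBit_ne, (flipBit_ne _ _).symm]

def ofHeadDirs (S : (Fin n → ZMod 2) → Finset (Fin n))
    (hS : ∀ v i, i ∈ S (flipBit v i) ↔ i ∉ S v) : CubeOrientation n where
  head v i := if i ∈ S v then v else flipBit v i
  head_mem v i := by split_ifs <;> simp
  compatible v i := by by_cases h : i ∈ S v <;> simp [h, hS]

lemma headDirs_ofHeadDirs (S : (Fin n → ZMod 2) → Finset (Fin n))
    (hS : ∀ v i, i ∈ S (flipBit v i) ↔ i ∉ S v) (v : Fin n → ZMod 2) :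
    (ofHeadDirs S hS).headDirs v = S v := by
  ext i
  by_cases h : i ∈ S v <;> simp [headDirs, ofHeadDirs, h, flipBit_ne]

def prod (o : CubeOrientation n) (q : CubeOrientation m) : CubeOrientation (n + m) :=
  ofHeadDirs
    (fun v => (o.headDirs (v ∘ Fin.castAdd m)).map (Fin.castAddEmb m) ∪
      (q.headDirs (v ∘ Fin.natAdd n)).map (Fin.natAddEmb n))
    (by
      intro v i
      induction i using Fin.addCases with
      | left i =>
        have hi : Fin.castAdd m i ∉ Set.range (Fin.natAdd n) := by
          rintro ⟨j, hj⟩; exact Fin.castAdd_ne_natAdd i j hj.symm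
        simp [flipBit_comp_of_injective (Fin.castAdd_injective n m),
          flipBit_comp_of_notMem_range hi, mem_headDirs_flipBit, (Fin.castAdd_ne_natAdd _ _).symm]
      | right j =>
        have hj : Fin.natAdd n j ∉ Set.range (Fin.castAdd m) := by
          rintro ⟨i, hi⟩; exact Fin.castAdd_ne_natAdd i j hi
        simp [flipBit_comp_of_injective (Fin.natAdd_injective m n),
          flipBit_comp_of_notMem_range hj, mem_headDirs_flipBit, Fin.castAdd_ne_natAdd])

lemma inDeg_prod (o : CubeOrientation n) (q : CubeOrientation m) (v : Fin (n + m) → ZMod 2) :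
    (o.prod q).inDeg v = o.inDeg (v ∘ Fin.castAdd m) + q.inDeg (v ∘ Fin.natAdd n) := by
  rw [inDeg_eq_card_headDirs, prod, headDirs_ofHeadDirs, Finset.card_union_of_disjoint,
    Finset.card_map, Finset.card_map]
  · rfl
  · simp [Finset.disjoint_left, (Fin.castAdd_ne_natAdd _ _).symm]

/-- The directed 4-cycle `00 → 01 → 11 → 10 → 00`. -/
def squareCycle : CubeOrientation 2 :=
  ofHeadDirs (fun v => if v 0 = v 1 then {0} else {1}) (by decide)

lemma inDeg_squareCycle (v : Fin 2 → ZMod 2) : squareCycle.inDeg v = 1 := by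
  rw [inDeg_eq_card_headDirs, squareCycle, headDirs_ofHeadDirs]
  split_ifs <;> rfl

end CubeOrientation

theorem hypercube_two_indegrees_add_two_general (n : ℕ) (a b : ℤ)
    (h : ∃ o : CubeOrientation n, ∀ v, (o.inDeg v : ℤ) = a ∨ (o.inDeg v : ℤ) = b) :
    ∃ o : CubeOrientation (n + 2), ∀ v,
      (o.inDeg v : ℤ) = a + 1 ∨ (o.inDeg v : ℤ) = b + 1 := by
  obtain ⟨o, ho⟩ := h
  refine ⟨o.prod CubeOrientation.squareCycle, fun v => ?_⟩
  rw [CubeOrientation.inDeg_prod, CubeOrientation.inDeg_squareCycle]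
  push_cast
  rcases ho (v ∘ Fin.castAdd 2) with h | h <;> simp [h]

theorem hypercube_two_indegrees_add_two (n : ℕ) (hn : 0 < n) (a b : ℤ)
    (ha0 : 0 ≤ a) (han : a ≤ n) (hb0 : 0 ≤ b) (hbn : b ≤ n)
    (h : ∃ o : CubeOrientation n, ∀ v, (o.inDeg v : ℤ) = a ∨ (o.inDeg v : ℤ) = b) :
    ∃ o : CubeOrientation (n + 2), ∀ v,
      (o.inDeg v : ℤ) = a + 1 ∨ (o.inDeg v : ℤ) = b + 1 :=
  hypercube_two_indegrees_add_two_general n a b h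
end

section
/- Let n and a be integers with 1 ≤ a < n and gcd(a, n) = 1, and suppose there exist positive integers s and t with s + t = 2^n and a·s + n·t = n·2^(n-1). Then n and a are both odd, 2a < n, and n − a = 2^k for some non-negative integer k (equivalently, 2^k < n < 2^(k+1) and a = n − 2^k). -/
theorem primitive_reduction_arithmetic (n a : ℕ) (ha1 : 1 ≤ a) (han : a < n)
    (hgcd : Nat.gcd a n = 1)
    (s t : ℕ) (hs : 0 < s) (ht : 0 < t) (hst : s + t = 2 ^ n)
    (hsum : a * s + n * t = n * 2 ^ (n - 1)) :
    Odd n ∧ Odd a ∧ 2 * a < n ∧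
      ∃ k : ℕ, n - a = 2 ^ k ∧ 2 ^ k < n ∧ n < 2 ^ (k + 1) ∧ a = n - 2 ^ k := by
  have hn2 : 2 ≤ n := by omega
  have h2 : 2 ^ n = 2 * 2 ^ (n - 1) := by
    rw [← pow_succ']
    congr 1
    omega
  have h1 : n * s + n * t = n * (2 * 2 ^ (n - 1)) := by rw [← Nat.mul_add, hst, h2]
  have h3 : n * s = a * s + n * 2 ^ (n - 1) := by nlinarith
  have hkey : (n - a) * s = n * 2 ^ (n - 1) := by
    rw [Nat.sub_mul, h3, Nat.add_sub_cancel_left]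
  have hco : Nat.Coprime (n - a) n :=
    (Nat.coprime_self_sub_left han.le).mpr hgcd
  have hdvd : (n - a) ∣ 2 ^ (n - 1) :=
    hco.dvd_of_dvd_mul_left ⟨s, hkey.symm⟩
  obtain ⟨k, hk, hkeq⟩ := (Nat.dvd_prime_pow Nat.prime_two).mp hdvd
  have hslt : s < 2 ^ n := by omega
  have hlt : n * 2 ^ (n - 1) < (n - a) * 2 * 2 ^ (n - 1) := by
    calc n * 2 ^ (n - 1) = (n - a) * s := hkey.symm
    _ < (n - a) * 2 ^ n := Nat.mul_lt_mul_of_pos_left hslt (by omega)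
    _ = (n - a) * 2 * 2 ^ (n - 1) := by rw [h2]; ring
  have hna : n < (n - a) * 2 := Nat.lt_of_mul_lt_mul_right hlt
  have h2a : 2 * a < n := by omega
  have hk1 : 1 ≤ k := by
    by_contra hk0
    have : k = 0 := by omega
    rw [this, pow_zero] at hkeq
    omega
  have heven : 2 ∣ n - a := hkeq ▸ dvd_pow_self 2 (by omega)
  have hng : ¬ (2 ∣ a ∧ 2 ∣ n) := by
    rintro ⟨h1, h2⟩
    have := Nat.dvd_gcd h1 h2
    omega
  have hnodd : ¬ 2 ∣ n := by
    intro hn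
    exact hng ⟨by omega, hn⟩
  have haodd : ¬ 2 ∣ a := by omega
  refine ⟨Nat.odd_iff.mpr (by omega), Nat.odd_iff.mpr (by omega), h2a, k, hkeq, by omega, ?_, by omega⟩
  rw [pow_succ]
  omega
end

section
/- Fix an alphabet size k ≥ 2. Let n be a positive integer and a, b integers with 0 ≤ a ≤ n and 0 ≤ b ≤ n. If there exists a marking of the k-ary n-cube in which every vertex has mark-count a or b, then there exists a marking of the k-ary (n+k)-cube in which every vertex has mark-count a+1 or b+1. -/
/-- A marking of the `k`-ary `n`-cube: for each vertex `v : Fin n → Fin k` and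
each direction `i`, the "edge through `v` in direction `i`" is the set of `k`
vertices agreeing with `v` in all coordinates except possibly `i`.  A marking
assigns to each such edge one of its `k` vertices: `mark v i` is the vertex
assigned to the edge through `v` in direction `i`; it must lie on that edge
(`mem_edge`) and depend only on the edge itself (`compatible`). -/
structure Marking (k n : ℕ) where
  mark : (Fin n → Fin k) → Fin n → (Fin n → Fin k)
  mem_edge : ∀ v i j, j ≠ i → mark v i j = v j
  compatible : ∀ v w i, (∀ j, j ≠ i → v j = w j) → mark v i = mark w i

/-- The mark-count of a vertex `v`: the number of directions `i` such that
the edge through `v` in direction `i` has `v` as its assigned vertex. -/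
def Marking.count {k n : ℕ} (m : Marking k n) (v : Fin n → Fin k) : ℕ :=
  (Finset.univ.filter fun i : Fin n => m.mark v i = v).card

/-! Markings of the `n`-cube and of the `p`-cube glue to a marking of the `(n + p)`-cube
whose mark-counts add up. The `k`-ary `k`-cube carries a marking with every mark-count `1`:
on each edge in direction `j`, mark the vertex whose coordinates sum to `j` in `ℤ/k`; a
vertex `v` is then marked exactly in direction `∑ t, v t`. Gluing this marking onto the given
one raises every mark-count by one. -/

open Finset

namespace Marking

variable {k n p : ℕ}

lemma mark_apply_self_eq_iff (m : Marking k n) (v : Fin n → Fin k) (i : Fin n) :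
    m.mark v i i = v i ↔ m.mark v i = v := by
  refine ⟨fun h => funext fun j => ?_, fun h => by rw [h]⟩
  rcases eq_or_ne j i with rfl | hj
  · exact h
  · exact m.mem_edge v i j hj

lemma count_eq_card_mark_apply_self (m : Marking k n) (v : Fin n → Fin k) :
    m.count v = #{i | m.mark v i i = v i} := by
  simp only [count, mark_apply_self_eq_iff]

/-- The marking that, on the edge through `v` in direction `i`, picks the vertex with
`i`-th coordinate `c v i`. -/
def ofChoice (c : (Fin n → Fin k) → Fin n → Fin k)
    (hc : ∀ v w i, (∀ j, j ≠ i → v j = w j) → c v i = c w i) : Marking k n where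
  mark v i := Function.update v i (c v i)
  mem_edge v i j hj := Function.update_of_ne hj _ _
  compatible v w i h := by
    funext j
    rcases eq_or_ne j i with rfl | hj
    · simp [hc v w j h]
    · simp [Function.update_of_ne hj, h j hj]

lemma count_ofChoice (c : (Fin n → Fin k) → Fin n → Fin k)
    (hc : ∀ v w i, (∀ j, j ≠ i → v j = w j) → c v i = c w i) (v : Fin n → Fin k) :
    (ofChoice c hc).count v = #{i | c v i = v i} := by
  simp [count_eq_card_mark_apply_self, ofChoice]

def append (m₁ : Marking k n) (m₂ : Marking k p) : Marking k (n + p) :=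
  ofChoice
    (fun v => Fin.addCases (fun i => m₁.mark (v ∘ Fin.castAdd p) i i)
      (fun j => m₂.mark (v ∘ Fin.natAdd n) j j))
    (by
      intro v w i h
      induction i using Fin.addCases with
      | left i =>
        simp only [Fin.addCases_left]
        rw [m₁.compatible (v ∘ Fin.castAdd p) (w ∘ Fin.castAdd p) i
          fun j hj => h _ fun he => hj (Fin.castAdd_injective _ _ he)]
      | right j =>
        simp only [Fin.addCases_right]
        rw [m₂.compatible (v ∘ Fin.natAdd n) (w ∘ Fin.natAdd n) j
          fun t ht => h _ fun he => ht (Fin.natAdd_injective _ _ he)])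

lemma count_append (m₁ : Marking k n) (m₂ : Marking k p) (v : Fin (n + p) → Fin k) :
    (m₁.append m₂).count v = m₁.count (v ∘ Fin.castAdd p) + m₂.count (v ∘ Fin.natAdd n) := by
  rw [append, count_ofChoice, count_eq_card_mark_apply_self, count_eq_card_mark_apply_self]
  simp only [card_filter, Fin.sum_univ_add, Fin.addCases_left, Fin.addCases_right,
    Function.comp_apply]

def sumMarking (k : ℕ) [NeZero k] : Marking k k :=
  ofChoice (fun v j => j - ∑ t ∈ univ.erase j, v t)
    (fun v w j h => by
      rw [sum_congr rfl fun t ht => h t (ne_of_mem_erase ht)])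

lemma count_sumMarking [NeZero k] (v : Fin k → Fin k) : (sumMarking k).count v = 1 := by
  have hmarked : ∀ j, j - ∑ t ∈ univ.erase j, v t = v j ↔ j = ∑ t, v t := fun j => by
    rw [← add_sum_erase _ _ (mem_univ j), sub_eq_iff_eq_add]
  simp only [sumMarking, count_ofChoice, hmarked, filter_eq', mem_univ, if_true, card_singleton]

end Marking

theorem kary_marking_add_general (k : ℕ) (hk : 2 ≤ k) (n : ℕ) (a b : ℤ)
    (h : ∃ m : Marking k n, ∀ v, (m.count v : ℤ) = a ∨ (m.count v : ℤ) = b) :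
    ∃ m : Marking k (n + k), ∀ v,
      (m.count v : ℤ) = a + 1 ∨ (m.count v : ℤ) = b + 1 := by
  have : NeZero k := ⟨by omega⟩
  obtain ⟨m, hm⟩ := h
  refine ⟨m.append (Marking.sumMarking k), fun v => ?_⟩
  rw [Marking.count_append, Marking.count_sumMarking]
  push_cast
  rcases hm (v ∘ Fin.castAdd k) with h | h
  · exact Or.inl (by rw [h])
  · exact Or.inr (by rw [h])

theorem kary_marking_add (k : ℕ) (hk : 2 ≤ k) (n : ℕ) (hn : 0 < n) (a b : ℤ)
    (ha0 : 0 ≤ a) (han : a ≤ n) (hb0 : 0 ≤ b) (hbn : b ≤ n)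
    (h : ∃ m : Marking k n, ∀ v, (m.count v : ℤ) = a ∨ (m.count v : ℤ) = b) :
    ∃ m : Marking k (n + k), ∀ v,
      (m.count v : ℤ) = a + 1 ∨ (m.count v : ℤ) = b + 1 :=
  kary_marking_add_general k hk n a b h
end

section
/- Fix an alphabet size k ≥ 2. Let n and ℓ be positive integers and a, b integers with 0 ≤ a ≤ n and 0 ≤ b ≤ n. If there exists a marking of the k-ary n-cube in which every vertex has mark-count a or b, then there exists a marking of the k-ary (ℓ·n)-cube in which every vertex has mark-count ℓ·a or ℓ·b. -/
/-!
Split the `ℓ * n` coordinates of the big cube into `ℓ` blocks of `n` and let `σ v` be the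
blockwise sum of `v` in `ℤ/k`: `(σ v) i = ∑ j, v (j, i)`. Along the edge through `v` in
direction `(j, i)`, the map `σ` is a bijection onto the edge through `σ v` in direction `i`,
so a marking of the small cube pulls back to one of the big cube: mark the vertex whose image
is the marked vertex. Then `v` is marked in direction `(j, i)` exactly when `σ v` is marked in
direction `i`, whence the mark-count of `v` is `ℓ` times that of `σ v`.
-/

namespace Marking

variable {k n ℓ : ℕ}

theorem mark_eq_self_iff (m : Marking k n) (u : Fin n → Fin k) (i : Fin n) :
    m.mark u i = u ↔ m.mark u i i = u i := by
  refine ⟨fun h => by rw [h], fun h => funext fun j => ?_⟩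
  by_cases hj : j = i
  · exact hj ▸ h
  · exact m.mem_edge u i j hj

theorem card_filter_snd_symm_finProdFinEquiv (P : Fin n → Prop) [DecidablePred P] :
    (Finset.univ.filter fun c : Fin (ℓ * n) => P (finProdFinEquiv.symm c).2).card
      = ℓ * (Finset.univ.filter P).card := by
  rw [Finset.card_equiv (t := Finset.univ.filter fun p : Fin ℓ × Fin n => P p.2)
      finProdFinEquiv.symm (by simp), ← Finset.univ_product_univ,
    Finset.filter_product_right, Finset.card_product, Finset.card_univ, Fintype.card_fin]

variable [NeZero k]

def blockSum (v : Fin (ℓ * n) → Fin k) (i : Fin n) : Fin k :=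
  ∑ j : Fin ℓ, v (finProdFinEquiv (j, i))

section EqOffCoordinate

variable {v w : Fin (ℓ * n) → Fin k} {j : Fin ℓ} {i : Fin n}
  (hvw : ∀ c, c ≠ finProdFinEquiv (j, i) → v c = w c)
include hvw

theorem blockSum_eq_of_eq_off {i' : Fin n} (hi' : i' ≠ i) : blockSum v i' = blockSum w i' :=
  Finset.sum_congr rfl fun _ _ =>
    hvw _ fun h => hi' (Prod.ext_iff.1 (finProdFinEquiv.injective h)).2

theorem sub_blockSum_eq_of_eq_off :
    v (finProdFinEquiv (j, i)) - blockSum v i = w (finProdFinEquiv (j, i)) - blockSum w i := by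
  have hrest : ∑ j' ∈ Finset.univ.erase j, v (finProdFinEquiv (j', i))
      = ∑ j' ∈ Finset.univ.erase j, w (finProdFinEquiv (j', i)) :=
    Finset.sum_congr rfl fun j' hj' => hvw _ fun h =>
      Finset.ne_of_mem_erase hj' (Prod.ext_iff.1 (finProdFinEquiv.injective h)).1
  simp only [blockSum, ← Finset.add_sum_erase _ _ (Finset.mem_univ j), hrest, sub_add_cancel_left]

end EqOffCoordinate

def scale (ℓ : ℕ) (m : Marking k n) : Marking k (ℓ * n) where
  mark v c :=
    let i := (finProdFinEquiv.symm c).2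
    Function.update v c (v c + (m.mark (blockSum v) i i - blockSum v i))
  mem_edge _ _ _ h := Function.update_of_ne h _ _
  compatible v w c hvw := by
    obtain ⟨⟨j, i⟩, rfl⟩ := finProdFinEquiv.surjective c
    have hmark : m.mark (blockSum v) i = m.mark (blockSum w) i :=
      m.compatible _ _ _ fun _ hi' => blockSum_eq_of_eq_off hvw hi'
    funext c
    by_cases hc : c = finProdFinEquiv (j, i)
    · subst hc
      simp only [Equiv.symm_apply_apply, Function.update_self, hmark, ← add_sub_assoc,
        add_sub_right_comm _ _ (blockSum _ i), sub_blockSum_eq_of_eq_off hvw]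
    · simp only [Function.update_of_ne hc, hvw c hc]

theorem scale_mark_eq_self_iff (m : Marking k n) (v : Fin (ℓ * n) → Fin k) (c : Fin (ℓ * n)) :
    (m.scale ℓ).mark v c = v ↔
      m.mark (blockSum v) (finProdFinEquiv.symm c).2 = blockSum v := by
  rw [mark_eq_self_iff, mark_eq_self_iff]
  simp only [scale, Function.update_self, add_eq_left, sub_eq_zero]

theorem count_scale (m : Marking k n) (v : Fin (ℓ * n) → Fin k) :
    (m.scale ℓ).count v = ℓ * m.count (blockSum v) := by
  simp only [count, scale_mark_eq_self_iff]
  exact card_filter_snd_symm_finProdFinEquiv fun i => m.mark (blockSum v) i = blockSum v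

end Marking

theorem kary_marking_scale_general (k : ℕ) (hk : 2 ≤ k) (n ℓ : ℕ)
    (a b : ℤ)
    (h : ∃ m : Marking k n, ∀ v, (m.count v : ℤ) = a ∨ (m.count v : ℤ) = b) :
    ∃ m : Marking k (ℓ * n), ∀ v,
      (m.count v : ℤ) = ℓ * a ∨ (m.count v : ℤ) = ℓ * b := by
  have : NeZero k := ⟨by omega⟩
  obtain ⟨m, hm⟩ := h
  refine ⟨m.scale ℓ, fun v => ?_⟩
  rw [Marking.count_scale, Nat.cast_mul]
  rcases hm (Marking.blockSum v) with h' | h' <;> rw [h'] <;> simp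

theorem kary_marking_scale (k : ℕ) (hk : 2 ≤ k) (n ℓ : ℕ) (hn : 0 < n) (hℓ : 0 < ℓ)
    (a b : ℤ) (ha0 : 0 ≤ a) (han : a ≤ n) (hb0 : 0 ≤ b) (hbn : b ≤ n)
    (h : ∃ m : Marking k n, ∀ v, (m.count v : ℤ) = a ∨ (m.count v : ℤ) = b) :
    ∃ m : Marking k (ℓ * n), ∀ v,
      (m.count v : ℤ) = ℓ * a ∨ (m.count v : ℤ) = ℓ * b :=
  kary_marking_scale_general k hk n ℓ a b h
end

section
/- For alphabet size k = 3 and dimension n = 4, there exists a marking of the 3-ary 4-cube in which every vertex has mark-count 0 or 3; in such a marking exactly 36 of the 81 vertices have mark-count 3 and the remaining 45 have mark-count 0. -/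
/-!
Each edge in direction `i` has exactly one marked vertex, so the `k ^ n` vertices split into
`k ^ (n - 1)` edges in direction `i`, each contributing one vertex fixed in that direction. Summing
mark-counts over all vertices therefore gives `n * k ^ (n - 1)`, which is `108` for `k = 3`, `n = 4`.
If every count is `0` or `3`, exactly `108 / 3 = 36` vertices have count `3` and the other `45`
have count `0`. The existence part is a marking given by explicit tables, checked on all 81 vertices.
-/

open Finset Function

theorem Finset.mul_card_filter_eq_sum_of_forall_eq_zero_or_eq {α : Type*} (s : Finset α)
    (f : α → ℕ) (c : ℕ) (h : ∀ a ∈ s, f a = 0 ∨ f a = c) :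
    c * #{a ∈ s | f a = c} = ∑ a ∈ s, f a := by
  rw [← sum_filter_of_ne (p := fun a => f a = c) fun a ha hne => (h a ha).resolve_left hne,
    sum_congr rfl fun a ha => (mem_filter.mp ha).2, sum_const, smul_eq_mul, mul_comm]

namespace Marking

variable {k n : ℕ} (m : Marking k n)

theorem mark_mark (v : Fin n → Fin k) (i : Fin n) : m.mark (m.mark v i) i = m.mark v i :=
  m.compatible _ _ i (m.mem_edge v i)

theorem card_filter_mark_eq {u : Fin n → Fin k} {i : Fin n} (hu : m.mark u i = u) :
    #{v | m.mark v i = u} = k := by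
  suffices h : ({v | m.mark v i = u} : Finset _) = univ.image (update u i) by
    rw [h, card_image_of_injective _ (update_injective u i), card_univ, Fintype.card_fin]
  ext v
  simp only [mem_filter, mem_univ, true_and, mem_image]
  constructor
  · rintro rfl
    refine ⟨v i, funext fun j => ?_⟩
    rcases eq_or_ne j i with rfl | hj
    · simp
    · rw [update_of_ne hj, m.mem_edge v i j hj]
  · rintro ⟨t, -, rfl⟩
    rw [m.compatible _ u i fun j hj => update_of_ne hj _ _, hu]

theorem mul_card_filter_mark_eq_self (i : Fin n) : k * #{v | m.mark v i = v} = k ^ n := by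
  have hfiber := card_eq_sum_card_fiberwise (s := univ) (t := {u | m.mark u i = u})
    (f := fun v => m.mark v i) fun v _ => by simpa using m.mark_mark v i
  rw [sum_congr rfl fun u hu => m.card_filter_mark_eq (mem_filter.mp hu).2, sum_const,
    smul_eq_mul, card_univ, Fintype.card_fun, Fintype.card_fin, Fintype.card_fin] at hfiber
  rw [hfiber, mul_comm]

theorem mul_sum_count : k * ∑ v, m.count v = n * k ^ n := calc
  k * ∑ v, m.count v = k * ∑ i, #{v | m.mark v i = v} :=
    congrArg (k * ·) (sum_card_bipartiteAbove_eq_sum_card_bipartiteBelow fun v i => m.mark v i = v)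
  _ = n * k ^ n := by simp [mul_sum, mul_card_filter_mark_eq_self]

def ofRule (r : Fin (n + 1) → (Fin n → Fin k) → Fin k) : Marking k (n + 1) where
  mark v i := update v i (r i (i.removeNth v))
  mem_edge v i _ hj := update_of_ne hj _ _
  compatible v w i h := by
    have hrest : i.removeNth v = i.removeNth w := funext fun j => h _ (Fin.succAbove_ne i j)
    funext j
    rcases eq_or_ne j i with rfl | hj
    · simp [hrest]
    · simp [update_of_ne hj, h j hj]

theorem count_ofRule (r : Fin (n + 1) → (Fin n → Fin k) → Fin k) (v : Fin (n + 1) → Fin k) :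
    (ofRule r).count v = #{i | r i (i.removeNth v) = v i} := by
  simp [count, ofRule]

end Marking

/-- Entry `[i][a][b][c]` is the `i`-th coordinate of the marked vertex on the edge in direction `i`
whose remaining coordinates are `a, b, c` in increasing order of direction. -/
def ternaryRule : Fin 4 → (Fin 3 → Fin 3) → Fin 3 := fun i u =>
  ![![![![2,1,1],![1,0,1],![0,2,0]],![![2,1,0],![0,1,0],![1,0,1]],![![0,2,2],![0,1,0],![0,0,2]]],
    ![![![2,0,1],![1,0,2],![2,2,0]],![![2,0,0],![0,1,0],![1,0,2]],![![0,2,2],![2,1,0],![0,0,1]]],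
    ![![![2,0,2],![1,2,1],![1,2,1]],![![1,2,0],![2,0,2],![0,1,2]],![![2,2,1],![0,1,2],![1,0,2]]],
    ![![![1,1,0],![2,2,1],![0,0,0]],![![1,2,1],![1,1,2],![0,1,2]],![![0,2,0],![0,1,2],![2,0,2]]]]
    i (u 0) (u 1) (u 2)

theorem count_ofRule_ternaryRule (v : Fin 4 → Fin 3) :
    (Marking.ofRule ternaryRule).count v = 0 ∨ (Marking.ofRule ternaryRule).count v = 3 := by
  have hv : v = ![v 0, v 1, v 2, v 3] := by funext j; fin_cases j <;> rfl
  rw [Marking.count_ofRule, hv]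
  generalize v 0 = a, v 1 = b, v 2 = c, v 3 = d
  revert a b c d
  decide

theorem ternary_4cube_marking_0_3 :
    (∃ m : Marking 3 4, ∀ v, m.count v = 0 ∨ m.count v = 3) ∧
      ∀ m : Marking 3 4, (∀ v, m.count v = 0 ∨ m.count v = 3) →
        ((Finset.univ : Finset (Fin 4 → Fin 3)).filter fun v => m.count v = 3).card = 36 ∧
        ((Finset.univ : Finset (Fin 4 → Fin 3)).filter fun v => m.count v = 0).card = 45 := by
  refine ⟨⟨_, count_ofRule_ternaryRule⟩, fun m hm => ?_⟩
  have hsum := m.mul_sum_count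
  rw [← mul_card_filter_eq_sum_of_forall_eq_zero_or_eq _ _ 3 fun v _ => hm v] at hsum
  have hsplit : #{v | m.count v = 0} + #{v | m.count v = 3} = 3 ^ 4 := by
    rw [← card_union_of_disjoint (disjoint_filter.2 fun v _ h => by omega), ← filter_or,
      filter_true_of_mem fun v _ => hm v]
    simp
  omega
end
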